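/- arXiv:math/0010149 — 2 statements merged into one kernel-verified Lean document; each statement's English description precedes it below -/
import Mathlib

section
/- For all natural numbers n, 5 times the sum over i from 0 to n of C(n,i)·F_i^3 equals 2^n·F_{2n} + 3·F_n. -/
/-!
By Binet's formula `√5 F_i = φ^i - ψ^i` and `φψ = -1`, cubing gives `5 F_i^3 = F_{3i} - 3 (-1)^i F_i`.
The binomial theorem then sums both terms in closed form: `1 + φ^3 = 2φ^2` turns
`∑ C(n,i) F_{3i}` into `2^n F_{2n}`, and `1 - φ = ψ`, `1 - ψ = φ` turn `∑ C(n,i) (-1)^i F_i` into `-F_n`.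
-/

open Finset Real
open scoped goldenRatio

theorem sum_range_choose_mul_pow {R : Type*} [CommSemiring R] (x : R) (n : ℕ) :
    ∑ i ∈ range (n + 1), (n.choose i : R) * x ^ i = (1 + x) ^ n := by
  simp [add_comm 1 x, add_pow, mul_comm]

theorem sum_range_choose_mul_pow_sub_pow_div {K : Type*} [Field K] (a b c : K) (n : ℕ) :
    ∑ i ∈ range (n + 1), (n.choose i : K) * ((a ^ i - b ^ i) / c) =
      ((1 + a) ^ n - (1 + b) ^ n) / c := by
  simp_rw [mul_div_assoc', mul_sub, ← sum_div, sum_sub_distrib, sum_range_choose_mul_pow]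

theorem one_add_goldenRatio_pow_three : 1 + φ ^ 3 = 2 * φ ^ 2 := by
  linear_combination (goldenRatio - 1) * goldenRatio_sq

theorem one_add_goldenConj_pow_three : 1 + ψ ^ 3 = 2 * ψ ^ 2 := by
  linear_combination (goldenConj - 1) * goldenConj_sq

theorem five_mul_fib_pow_three (n : ℕ) :
    5 * (Nat.fib n : ℝ) ^ 3 = Nat.fib (3 * n) - 3 * (-1) ^ n * Nat.fib n := by
  have hs : √5 ^ 2 = 5 := sq_sqrt (by norm_num)
  rw [← goldenRatio_mul_goldenConj, mul_pow]
  simp_rw [coe_fib_eq, mul_comm 3 n, pow_mul]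
  field_simp
  rw [hs]
  ring

theorem sum_range_choose_mul_fib_three_mul (n : ℕ) :
    ∑ i ∈ range (n + 1), (n.choose i : ℝ) * Nat.fib (3 * i) = 2 ^ n * Nat.fib (2 * n) := by
  simp_rw [coe_fib_eq, pow_mul]
  rw [sum_range_choose_mul_pow_sub_pow_div, one_add_goldenRatio_pow_three,
    one_add_goldenConj_pow_three, mul_pow, mul_pow, ← mul_sub, mul_div_assoc]

theorem sum_range_choose_mul_neg_one_pow_mul_fib (n : ℕ) :
    ∑ i ∈ range (n + 1), (n.choose i : ℝ) * ((-1) ^ i * Nat.fib i) = -Nat.fib n := by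
  have h (i : ℕ) : (-1) ^ i * (Nat.fib i : ℝ) = ((-φ) ^ i - (-ψ) ^ i) / √5 := by
    rw [coe_fib_eq, neg_pow φ, neg_pow ψ]
    ring
  simp_rw [h]
  rw [sum_range_choose_mul_pow_sub_pow_div, ← sub_eq_add_neg, ← sub_eq_add_neg,
    one_sub_goldenConj, one_sub_goldenRatio, coe_fib_eq]
  ring

theorem stmt_5 (n : ℕ) :
    5 * ∑ i ∈ Finset.range (n + 1), n.choose i * Nat.fib i ^ 3 =
      2 ^ n * Nat.fib (2 * n) + 3 * Nat.fib n := by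
  have h : 5 * ∑ i ∈ range (n + 1), (n.choose i : ℝ) * Nat.fib i ^ 3 =
      2 ^ n * Nat.fib (2 * n) + 3 * Nat.fib n :=
    calc 5 * ∑ i ∈ range (n + 1), (n.choose i : ℝ) * Nat.fib i ^ 3
        = ∑ i ∈ range (n + 1), (n.choose i : ℝ) * Nat.fib (3 * i)
            - 3 * ∑ i ∈ range (n + 1), (n.choose i : ℝ) * ((-1) ^ i * Nat.fib i) := by
          simp_rw [mul_sum, ← sum_sub_distrib]
          exact sum_congr rfl fun i _ => by
            linear_combination (n.choose i : ℝ) * five_mul_fib_pow_three i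
      _ = 2 ^ n * Nat.fib (2 * n) + 3 * Nat.fib n := by
          rw [sum_range_choose_mul_fib_three_mul, sum_range_choose_mul_neg_one_pow_mul_fib]
          ring
  exact_mod_cast h
end

section
/- For all natural numbers n, 5 times the sum over i from 0 to n of (-1)^i·C(n,i)·F_i^2 equals (-1)^n·L_n - 2^{n+1}. -/
def lucas : ℕ → ℤ
  | 0 => 2
  | 1 => 1
  | n + 2 => lucas (n + 1) + lucas n

/-!
By Binet, `5 F_i² = φ^{2i} + ψ^{2i} - 2(-1)^i` and `L_n = φⁿ + ψⁿ`. Hence the alternating binomial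
sum splits into three sums `∑ (-1)^i C(n,i) zⁱ = (1 - z)ⁿ`, at `z = φ², ψ², -1`, and
`1 - φ² = -φ`, `1 - ψ² = -ψ`.
-/

open Finset Real
open scoped goldenRatio

theorem lucas_eq_pow_add_pow {R : Type*} [CommRing R] {x y : R} (hx : x ^ 2 = x + 1)
    (hy : y ^ 2 = y + 1) (hxy : x + y = 1) : ∀ n, (lucas n : R) = x ^ n + y ^ n
  | 0 => by norm_num [lucas]
  | 1 => by simp [lucas, hxy]
  | n + 2 => by
    rw [lucas, Int.cast_add, lucas_eq_pow_add_pow hx hy hxy (n + 1),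
      lucas_eq_pow_add_pow hx hy hxy n]
    linear_combination (-x ^ n) * hx - y ^ n * hy

theorem sum_range_neg_one_pow_mul_choose_mul_pow {R : Type*} [CommRing R] (z : R) (n : ℕ) :
    ∑ i ∈ range (n + 1), (-1) ^ i * (n.choose i : R) * z ^ i = (1 - z) ^ n := by
  rw [sub_eq_neg_add, add_pow]
  refine sum_congr rfl fun i _ => ?_
  rw [neg_pow]
  ring

theorem Real.coe_lucas_eq (n : ℕ) : (lucas n : ℝ) = φ ^ n + ψ ^ n :=
  lucas_eq_pow_add_pow goldenRatio_sq goldenConj_sq goldenRatio_add_goldenConj n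

theorem Real.five_mul_coe_fib_sq (i : ℕ) :
    5 * (Nat.fib i : ℝ) ^ 2 = (φ ^ 2) ^ i + (ψ ^ 2) ^ i - 2 * (-1) ^ i := by
  have hφψ : φ ^ i * ψ ^ i = (-1) ^ i := by rw [← mul_pow, goldenRatio_mul_goldenConj]
  have hsqrt : √5 ^ 2 = 5 := sq_sqrt (by norm_num)
  rw [coe_fib_eq, div_pow, hsqrt, mul_div_cancel₀ _ (by norm_num), ← pow_mul, ← pow_mul,
    pow_mul', pow_mul']
  -- otherwise `linear_combination` unfolds `φ`, `ψ` into `√5` and fails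
  generalize φ ^ i = a, ψ ^ i = b at hφψ ⊢
  linear_combination (-2) * hφψ

theorem stmt_10 (n : ℕ) :
    5 * ∑ i ∈ Finset.range (n + 1), (-1 : ℤ) ^ i * (n.choose i : ℤ) * (Nat.fib i : ℤ) ^ 2 =
      (-1 : ℤ) ^ n * lucas n - 2 ^ (n + 1) := by
  suffices h : 5 * ∑ i ∈ range (n + 1), (-1 : ℝ) ^ i * (n.choose i : ℝ) * (Nat.fib i : ℝ) ^ 2 =
      (-1) ^ n * lucas n - 2 ^ (n + 1) by exact_mod_cast h
  let S : ℝ → ℝ := fun z => ∑ i ∈ range (n + 1), (-1) ^ i * (n.choose i : ℝ) * z ^ i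
  calc 5 * ∑ i ∈ range (n + 1), (-1 : ℝ) ^ i * (n.choose i : ℝ) * (Nat.fib i : ℝ) ^ 2
      = S (φ ^ 2) + S (ψ ^ 2) - 2 * S (-1) := by
        simp only [S, mul_sum, ← sum_add_distrib, ← sum_sub_distrib]
        refine sum_congr rfl fun i _ => ?_
        linear_combination ((-1) ^ i * (n.choose i : ℝ)) * five_mul_coe_fib_sq i
    _ = (1 - φ ^ 2) ^ n + (1 - ψ ^ 2) ^ n - 2 * (1 - -1) ^ n := by
        simp only [S, sum_range_neg_one_pow_mul_choose_mul_pow]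
    _ = (-1) ^ n * lucas n - 2 ^ (n + 1) := by
        rw [coe_lucas_eq, goldenRatio_sq, goldenConj_sq, sub_add_cancel_right, sub_add_cancel_right,
          neg_pow φ, neg_pow ψ]
        ring
end
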